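/- (Iterated power formula) Let R[x;σ,δ] be an Ore extension with σ an automorphism and δ a q-skew σ-derivation. Define F_i(a) = [n choose i]_q · σ^i(δ^{n−i}(a)). Then for all a ∈ R and n, m ∈ ℕ with m ≥ 1, (a xⁿ)^m = Σ_{i_1,…,i_{m−1}=0}^{n} a·F_{i_{m−1}}(a·F_{i_{m−2}}(⋯ a·F_{i_1}(a)⋯)) · x^{i_1+⋯+i_{m−1}+n} in R[x;σ,δ]. -/

import Mathlib

/-- The Gaussian (q-)binomial coefficient `[n choose i]_q`. -/
def qBinom {k : Type*} [Field k] (q : k) : ℕ → ℕ → k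
  | _, 0 => 1
  | 0, _ + 1 => 0
  | n + 1, i + 1 => qBinom q n i + q ^ (i + 1) * qBinom q n (i + 1)

/-- The nested product `a·F_{i_{m−1}}(a·F_{i_{m−2}}(⋯ a·F_{i_1}(a)⋯))`, where the
list of indices is `[i_{m−1}, …, i_1]`. -/
def nestProd {R : Type*} [Ring R] (a : R) (F : ℕ → R → R) : List ℕ → R
  | [] => a
  | i :: t => a * F i (nestProd a F t)

/-!
Commuting `X ^ n` past a coefficient gives the q-Leibniz rule
`X ^ n * c = ∑ᵢ [n choose i]_q σ^i(δ^{n-i} c) X^i`: induct on `n` using `X c = σ(c) X + δ(c)`,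
where the q-skew relation `δ σ^i = q^i σ^i δ` supplies exactly the factor `q^i` of the q-Pascal
rule. Hence `(a Xⁿ)(c Xᵉ) = ∑_b a F_b(c) X^{b+e}`, and multiplying `(a Xⁿ)^m` out one factor at a
time builds the nested product from the inside out.
-/

section QBinom

variable {k : Type*} [Field k] (q : k)

@[simp]
lemma qBinom_zero_right (n : ℕ) : qBinom q n 0 = 1 := by
  cases n <;> rfl

lemma qBinom_succ_succ (n i : ℕ) :
    qBinom q (n + 1) (i + 1) = qBinom q n i + q ^ (i + 1) * qBinom q n (i + 1) := rfl

lemma qBinom_eq_zero_of_lt : ∀ {n i : ℕ}, n < i → qBinom q n i = 0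
  | 0, _ + 1, _ => rfl
  | _ + 1, _ + 1, h => by
    rw [qBinom_succ_succ, qBinom_eq_zero_of_lt (by omega), qBinom_eq_zero_of_lt (by omega)]
    ring

lemma sum_qBinom_succ_smul {M : Type*} [AddCommMonoid M] [Module k M] (n : ℕ) (G : ℕ → M) :
    ∑ j ∈ Finset.range (n + 2), qBinom q (n + 1) j • G j =
      ∑ i ∈ Finset.range (n + 1), qBinom q n i • G (i + 1) +
        ∑ i ∈ Finset.range (n + 1), (q ^ i * qBinom q n i) • G i := by
  have htop : (q ^ (n + 1) * qBinom q n (n + 1)) • G (n + 1) = 0 := by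
    rw [qBinom_eq_zero_of_lt q (Nat.lt_succ_self n), mul_zero, zero_smul]
  rw [Finset.sum_range_succ', ← add_zero (∑ i ∈ Finset.range (n + 1), (q ^ i * _) • G i), ← htop,
    ← Finset.sum_range_succ, Finset.sum_range_succ' (fun i => (q ^ i * _) • G i)]
  simp only [qBinom_succ_succ, add_smul, Finset.sum_add_distrib, qBinom_zero_right, pow_zero,
    mul_one, add_assoc]

end QBinom

lemma Fin.sum_univ_pi_succ {β M : Type*} [Fintype β] [AddCommMonoid M] (m : ℕ)
    (f : (Fin (m + 1) → β) → M) :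
    ∑ ι : Fin (m + 1) → β, f ι = ∑ b : β, ∑ ι : Fin m → β, f (Fin.cons b ι) := by
  rw [← Fintype.sum_prod_type']
  exact (Fintype.sum_equiv (Fin.consEquiv fun _ => β) _ _ fun _ => rfl).symm

section OreExtension

variable {k R S : Type*} [Field k] [Ring R] [Algebra k R] [Ring S] [Algebra k S]
  (σ : R ≃ₐ[k] R) (δ : R →ₗ[k] R) {q : k}

lemma iterate_map_comm_of_q_skew (hq : ∀ a : R, q • σ (δ a) = δ (σ a)) (i : ℕ) (b : R) :
    δ ((⇑σ)^[i] b) = q ^ i • (⇑σ)^[i] (δ b) := by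
  induction i with
  | zero => simp
  | succ i ih =>
    rw [Function.iterate_succ_apply', ← hq, ih, map_smul, Function.iterate_succ_apply', smul_smul,
      pow_succ']

variable (φ : R →ₐ[k] S) (X : S)

lemma X_mul_iterate_monomial (hq : ∀ a : R, q • σ (δ a) = δ (σ a))
    (hrel : ∀ r : R, X * φ r = φ (σ r) * X + φ (δ r)) {n i : ℕ} (hi : i ≤ n) (a : R) :
    X * (φ ((⇑σ)^[i] ((⇑δ)^[n - i] a)) * X ^ i) =
      φ ((⇑σ)^[i + 1] ((⇑δ)^[n + 1 - (i + 1)] a)) * X ^ (i + 1) +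
        q ^ i • (φ ((⇑σ)^[i] ((⇑δ)^[n + 1 - i] a)) * X ^ i) := by
  rw [← mul_assoc, hrel, add_mul, mul_assoc, ← pow_succ', ← Function.iterate_succ_apply' (⇑σ),
    iterate_map_comm_of_q_skew σ δ hq, ← Function.iterate_succ_apply' (⇑δ), map_smul,
    smul_mul_assoc, Nat.add_sub_add_right, show n + 1 - i = (n - i).succ by omega]

lemma X_pow_mul_eq_sum (hq : ∀ a : R, q • σ (δ a) = δ (σ a))
    (hrel : ∀ r : R, X * φ r = φ (σ r) * X + φ (δ r)) (n : ℕ) (a : R) :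
    X ^ n * φ a =
      ∑ i ∈ Finset.range (n + 1), φ (qBinom q n i • (⇑σ)^[i] ((⇑δ)^[n - i] a)) * X ^ i := by
  simp only [map_smul, smul_mul_assoc]
  induction n with
  | zero => simp
  | succ n ih =>
    rw [pow_succ', mul_assoc, ih, Finset.mul_sum, sum_qBinom_succ_smul, ← Finset.sum_add_distrib]
    refine Finset.sum_congr rfl fun i hi => ?_
    rw [mul_smul_comm, X_mul_iterate_monomial σ δ φ X hq hrel (Finset.mem_range_succ_iff.mp hi),
      smul_add, mul_smul, smul_comm (q ^ i)]

lemma monomial_mul_monomial (hq : ∀ a : R, q • σ (δ a) = δ (σ a))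
    (hrel : ∀ r : R, X * φ r = φ (σ r) * X + φ (δ r)) (a c : R) (n e : ℕ) :
    φ a * X ^ n * (φ c * X ^ e) =
      ∑ b : Fin (n + 1),
        φ (a * (qBinom q n b • (⇑σ)^[b] ((⇑δ)^[n - b] c))) * X ^ ((b : ℕ) + e) := by
  rw [mul_assoc, ← mul_assoc (X ^ n), X_pow_mul_eq_sum σ δ φ X hq hrel, Finset.sum_mul,
    Finset.mul_sum, ← Fin.sum_univ_eq_sum_range]
  simp only [map_mul, pow_add, mul_assoc]

end OreExtension

theorem ore_iterated_power_formula_general {k : Type*} [Field k] {R : Type*} [Ring R] [Algebra k R]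
    (σ : R ≃ₐ[k] R) (δ : R →ₗ[k] R)
    (q : k)
    (hq : ∀ a : R, q • σ (δ a) = δ (σ a))
    {S : Type*} [Ring S] [Algebra k S] (φ : R →ₐ[k] S)
    (X : S)
    (hrel : ∀ r : R, X * φ r = φ (σ r) * X + φ (δ r)) :
    ∀ (a : R) (n m : ℕ), 1 ≤ m →
      (φ a * X ^ n) ^ m =
        ∑ ι : Fin (m - 1) → Fin (n + 1),
          φ (nestProd a (fun i b => qBinom q n i • (⇑σ)^[i] ((⇑δ)^[n - i] b))
              (List.ofFn (fun j => (ι j : ℕ)))) *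
            X ^ ((∑ j, (ι j : ℕ)) + n) := by
  intro a n m hm
  obtain ⟨m, rfl⟩ := Nat.exists_eq_add_of_le' hm
  rw [Nat.add_sub_cancel]
  induction m with
  | zero => simp [nestProd]
  | succ m ih =>
    rw [pow_succ', ih (by omega), Finset.mul_sum, Fin.sum_univ_pi_succ, Finset.sum_comm]
    refine Finset.sum_congr rfl fun ι _ => ?_
    simp only [monomial_mul_monomial σ δ φ X hq hrel, List.ofFn_succ, Fin.sum_univ_succ,
      Fin.cons_zero, Fin.cons_succ, nestProd, add_assoc]

/-- Iterated power formula in an Ore extension: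
`(a xⁿ)^m = Σ_{i_1,…,i_{m−1}=0}^{n} a·F_{i_{m−1}}(⋯ a·F_{i_1}(a)⋯) · x^{i_1+⋯+i_{m−1}+n}`,
where `F_i(a) = [n choose i]_q • σ^i(δ^{n−i}(a))`. -/
theorem ore_iterated_power_formula {k : Type*} [Field k] {R : Type*} [Ring R] [Algebra k R]
    (σ : R ≃ₐ[k] R) (δ : R →ₗ[k] R)
    (hleib : ∀ a b : R, δ (a * b) = σ a * δ b + δ a * b)
    (q : k) (hq0 : q ≠ 0)
    (hq : ∀ a : R, q • σ (δ a) = δ (σ a))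
    {S : Type*} [Ring S] [Algebra k S] (φ : R →ₐ[k] S) (hφ : Function.Injective φ)
    (X : S)
    (hbasis : ∀ s : S, ∃! p : ℕ →₀ R, s = ∑ i ∈ p.support, φ (p i) * X ^ i)
    (hrel : ∀ r : R, X * φ r = φ (σ r) * X + φ (δ r)) :
    ∀ (a : R) (n m : ℕ), 1 ≤ m →
      (φ a * X ^ n) ^ m =
        ∑ ι : Fin (m - 1) → Fin (n + 1),
          φ (nestProd a (fun i b => qBinom q n i • (⇑σ)^[i] ((⇑δ)^[n - i] b))
              (List.ofFn (fun j => (ι j : ℕ)))) *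
            X ^ ((∑ j, (ι j : ℕ)) + n) :=
  ore_iterated_power_formula_general σ δ q hq φ X hrel
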